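/- Let f : (0,∞) → ℝ be convex or concave, and φ, φ∘A log-concave, where A : ℝⁿ → ℝⁿ is a self-adjoint linear map with det A = 1. Then D_f(P_{φ∘A}, Q_{φ∘A}) = D_f(P_φ, Q_φ), where D_f(P_φ, Q_φ) = ∫_{supp φ} φ f( e^{⟨∇φ,x⟩/φ} φ^{−2} det(Hess(−ln φ)) ) dx. -/

import Mathlib

/-!
Substitute `y = A x`. Since `|det A| = 1`, this preserves Lebesgue measure, and the integrand
for `ψ ∘ A` at `x` is the integrand for `ψ` at `A x`: `∇(ψ ∘ A)(x) = A* ∇ψ(A x)` gives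
`⟪∇(ψ ∘ A)(x), x⟫ = ⟪∇ψ(A x), A x⟫`, and `Hess(ψ ∘ A)(x) = A* Hess ψ(A x) A` has determinant
`(det A)² det Hess ψ(A x) = det Hess ψ(A x)`.
-/

open Real MeasureTheory InnerProductSpace

noncomputable def detHess {n : ℕ} (ψ : EuclideanSpace ℝ (Fin n) → ℝ)
    (x : EuclideanSpace ℝ (Fin n)) : ℝ :=
  LinearMap.det (fderiv ℝ (gradient ψ) x).toLinearMap

theorem ContinuousLinearMap.det_adjoint {E : Type*} [NormedAddCommGroup E]
    [InnerProductSpace ℝ E] [FiniteDimensional ℝ E] (A : E →L[ℝ] E) :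
    (ContinuousLinearMap.adjoint A).det = A.det := by
  let b := stdOrthonormalBasis ℝ E
  rw [ContinuousLinearMap.det, ContinuousLinearMap.det, ← A.adjoint_toLinearMap,
    ← LinearMap.det_toMatrix b.toBasis, ← LinearMap.det_toMatrix b.toBasis,
    LinearMap.toMatrix_adjoint, Matrix.det_conjTranspose, star_trivial]

section
variable {E F : Type*} [NormedAddCommGroup E] [InnerProductSpace ℝ E] [CompleteSpace E]
  [NormedAddCommGroup F] [InnerProductSpace ℝ F] [CompleteSpace F]

theorem HasGradientAt.comp_continuousLinearMap {ψ : F → ℝ} {g : F} {A : E →L[ℝ] F} {x : E}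
    (h : HasGradientAt ψ g (A x)) :
    HasGradientAt (fun y => ψ (A y)) (ContinuousLinearMap.adjoint A g) x := by
  have hdual : toDual ℝ E (ContinuousLinearMap.adjoint A g) = (toDual ℝ F g).comp A := by
    ext v
    simp [ContinuousLinearMap.adjoint_inner_left]
  rw [hasGradientAt_iff_hasFDerivAt, hdual]
  exact h.hasFDerivAt.comp x A.hasFDerivAt

theorem gradient_comp_continuousLinearMap {ψ : F → ℝ} (hψ : Differentiable ℝ ψ) (A : E →L[ℝ] F) :
    gradient (fun y => ψ (A y)) = fun x => ContinuousLinearMap.adjoint A (gradient ψ (A x)) :=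
  funext fun x => (hψ (A x)).hasGradientAt.comp_continuousLinearMap.gradient

theorem ContDiff.differentiable_gradient {ψ : F → ℝ} (hψ : ContDiff ℝ 2 ψ) :
    Differentiable ℝ (gradient ψ) :=
  (toDual ℝ F).symm.toContinuousLinearEquiv.differentiable.comp
    ((hψ.fderiv_right (m := 1) le_rfl).differentiable one_ne_zero)
end

section
variable {E : Type*} [NormedAddCommGroup E] [NormedSpace ℝ E] [FiniteDimensional ℝ E]
  [MeasurableSpace E] [BorelSpace E] (μ : Measure E) [μ.IsAddHaarMeasure]
  {G : Type*} [NormedAddCommGroup G] [NormedSpace ℝ G]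

theorem ContinuousLinearMap.measurePreserving_of_abs_det_eq_one {A : E →L[ℝ] E}
    (hA : |A.det| = 1) : MeasurePreserving A μ μ := by
  refine ⟨A.continuous.measurable, ?_⟩
  have hA0 : A.det ≠ 0 := abs_ne_zero.mp (hA.symm ▸ one_ne_zero)
  simpa [hA] using Measure.map_linearMap_addHaar_eq_smul_addHaar μ hA0

theorem ContinuousLinearMap.integral_comp_of_abs_det_eq_one {A : E →L[ℝ] E}
    (hA : |A.det| = 1) (g : E → G) : ∫ x, g (A x) ∂μ = ∫ x, g x ∂μ := by
  have hA0 : A.det ≠ 0 := abs_ne_zero.mp (hA.symm ▸ one_ne_zero)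
  exact (A.measurePreserving_of_abs_det_eq_one μ hA).integral_comp
    (A.toContinuousLinearEquivOfDetNeZero hA0).toHomeomorph.measurableEmbedding g
end

theorem detHess_comp_continuousLinearMap {n : ℕ} {ψ : EuclideanSpace ℝ (Fin n) → ℝ}
    (hψ : ContDiff ℝ 2 ψ) (A : EuclideanSpace ℝ (Fin n) →L[ℝ] EuclideanSpace ℝ (Fin n))
    (x : EuclideanSpace ℝ (Fin n)) :
    detHess (fun y => ψ (A y)) x = A.det ^ 2 * detHess ψ (A x) := by
  have hHess : HasFDerivAt (gradient (fun y => ψ (A y)))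
      ((ContinuousLinearMap.adjoint A).comp ((fderiv ℝ (gradient ψ) (A x)).comp A)) x := by
    rw [gradient_comp_continuousLinearMap (hψ.differentiable two_ne_zero)]
    exact (ContinuousLinearMap.adjoint A).hasFDerivAt.comp x
      ((hψ.differentiable_gradient (A x)).hasFDerivAt.comp x A.hasFDerivAt)
  rw [detHess, detHess, hHess.fderiv]
  simp only [ContinuousLinearMap.toLinearMap_comp, LinearMap.det_comp]
  rw [← ContinuousLinearMap.det, ← ContinuousLinearMap.det, ContinuousLinearMap.det_adjoint]
  ring

theorem fDivergence_affine_invariance_general {n : ℕ}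
    (f : ℝ → ℝ)
    (ψ : EuclideanSpace ℝ (Fin n) → ℝ)
    (hψ : ContDiff ℝ 2 ψ)
    (A : EuclideanSpace ℝ (Fin n) →L[ℝ] EuclideanSpace ℝ (Fin n))
    (hAdet : LinearMap.det A.toLinearMap = 1) :
    (∫ x, Real.exp (-(ψ (A x))) *
        f (Real.exp (2 * ψ (A x) - (inner ℝ (gradient (fun y => ψ (A y)) x) x : ℝ))
            * detHess (fun y => ψ (A y)) x))
      = ∫ x, Real.exp (-(ψ x)) *
          f (Real.exp (2 * ψ x - (inner ℝ (gradient ψ x) x : ℝ)) * detHess ψ x) := by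
  have hdet : A.det = 1 := hAdet
  refine .trans ?_ (A.integral_comp_of_abs_det_eq_one volume (by rw [hdet, abs_one]) _)
  congr 1 with x
  rw [gradient_comp_continuousLinearMap (hψ.differentiable two_ne_zero),
    ContinuousLinearMap.adjoint_inner_left, detHess_comp_continuousLinearMap hψ, hdet,
    one_pow, one_mul]

/-- Affine invariance of the `f`-divergence of a log-concave function
`φ = e^{−ψ}` under a self-adjoint linear map `A` with `det A = 1`:
`D_f(P_{φ∘A}, Q_{φ∘A}) = D_f(P_φ, Q_φ)`, where
`D_f(P_φ,Q_φ) = ∫ φ f( e^{⟨∇φ,x⟩/φ} φ^{−2} det Hess(−ln φ) ) dx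
             = ∫ e^{−ψ} f( e^{2ψ−⟨∇ψ,x⟩} det Hess ψ ) dx`. -/
theorem fDivergence_affine_invariance {n : ℕ}
    (f : ℝ → ℝ) (hf : ConvexOn ℝ (Set.Ioi (0 : ℝ)) f ∨ ConcaveOn ℝ (Set.Ioi (0 : ℝ)) f)
    (ψ : EuclideanSpace ℝ (Fin n) → ℝ)
    (hψconv : ConvexOn ℝ Set.univ ψ) (hψ : ContDiff ℝ 2 ψ)
    (A : EuclideanSpace ℝ (Fin n) →L[ℝ] EuclideanSpace ℝ (Fin n))
    (hAsa : IsSelfAdjoint A) (hAdet : LinearMap.det A.toLinearMap = 1)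
    (hint : Integrable (fun x => Real.exp (-(ψ x)) *
      f (Real.exp (2 * ψ x - (inner ℝ (gradient ψ x) x : ℝ)) * detHess ψ x))) :
    (∫ x, Real.exp (-(ψ (A x))) *
        f (Real.exp (2 * ψ (A x) - (inner ℝ (gradient (fun y => ψ (A y)) x) x : ℝ))
            * detHess (fun y => ψ (A y)) x))
      = ∫ x, Real.exp (-(ψ x)) *
          f (Real.exp (2 * ψ x - (inner ℝ (gradient ψ x) x : ℝ)) * detHess ψ x) :=
  fDivergence_affine_invariance_general f ψ hψ A hAdet
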